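/- arXiv:0901.0188 — 4 statements merged into one kernel-verified Lean document; each statement's English description precedes it below -/
import Mathlib

section
/- If p is a nonconstant unary polynomial operation of a pargoid A that is indefinite (not definite), then there are b_1, ..., b_n ∈ A (n ≥ 0) such that p(x) = x·b_1·...·b_n (with association to the left) for all x. -/
/-- Left-associated iterated application x·b₁·...·bₙ in a pargoid. -/
def applyList {A : Type} (op : A → A → Option A) (x : A) (bs : List A) : Option A :=
  bs.foldl (fun acc b => acc.bind fun y => op y b) (some x)

/-- Unary polynomial operations of a pargoid, as terms. -/
inductive PGPoly (A : Type) where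
  | id : PGPoly A
  | const : A → PGPoly A
  | app : PGPoly A → PGPoly A → PGPoly A

/-- Partial evaluation of a unary polynomial. -/
def PGPoly.eval {A : Type} (op : A → A → Option A) : PGPoly A → A → Option A
  | .id, x => some x
  | .const a, _ => some a
  | .app p q, x => (p.eval op x).bind fun u => (q.eval op x).bind fun v => op u v

/-- Trivial polynomials: constructible without the product. -/
inductive PGPoly.Trivial {A : Type} : PGPoly A → Prop
  | id : PGPoly.Trivial .id
  | const (a : A) : PGPoly.Trivial (.const a)

/-- A polynomial is nonconstant (as a partial operation). -/
def PGPoly.Nonconstant {A : Type} (op : A → A → Option A) (p : PGPoly A) : Prop :=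
  ∃ x y, p.eval op x ≠ p.eval op y

/-- Definite polynomials: least class of nontrivial polynomials p₁·p₂
with p₁ definite or p₂ nonconstant. -/
inductive PGPoly.Definite {A : Type} (op : A → A → Option A) : PGPoly A → Prop
  | left (p q : PGPoly A) : PGPoly.Definite op p → PGPoly.Definite op (.app p q)
  | right (p q : PGPoly A) : q.Nonconstant op → PGPoly.Definite op (.app p q)

/-- The Leibniz congruence ϖ: a ≡ b iff every unary polynomial converges on a iff on b. -/
def varpi {A : Type} (op : A → A → Option A) (a b : A) : Prop :=
  ∀ p : PGPoly A, (p.eval op a).isSome ↔ (p.eval op b).isSome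

/-- A T-typed applicative algebra on carrier A with ground types G. -/
structure TypedPargoid (A : Type) (G : Type) where
  op : A → A → Option A
  S : Set (FreeMagma G)
  strict : ∀ α β : FreeMagma G, α * β ∈ S → α ∈ S ∧ β ∈ S
  Aset : FreeMagma G → Set A
  inj : ∀ α ∈ S, ∀ β ∈ S, Aset α = Aset β → α = β
  blocks_nonempty : ∀ α ∈ S, (Aset α).Nonempty
  cover : ∀ a : A, ∃ α ∈ S, a ∈ Aset α
  disjoint : ∀ α ∈ S, ∀ β ∈ S, α ≠ β → Aset α ∩ Aset β = ∅
  appIff : ∀ a b : A, (op a b).isSome ↔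
    ∃ α ∈ S, ∃ β ∈ S, a ∈ Aset (α * β) ∧ b ∈ Aset α ∧
      ∃ c, op a b = some c ∧ c ∈ Aset β

/-- A pargoid is typable if it carries some typed applicative algebra structure. -/
def Typable {A : Type} (op : A → A → Option A) : Prop :=
  ∃ (G : Type) (T : TypedPargoid A G), T.op = op

/-- b <_A a iff ab↓ or b = ac for some c. -/
def ltA {A : Type} (op : A → A → Option A) (b a : A) : Prop :=
  (op a b).isSome ∨ ∃ c, op a c = some b

lemma applyList_append {A : Type} (op : A → A → Option A) (x : A) (bs : List A) (b : A) :
    applyList op x (bs ++ [b]) = (applyList op x bs).bind fun y => op y b := by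
  simp [applyList, List.foldl_append]

theorem stmt3 {A : Type} (op : A → A → Option A) (p : PGPoly A)
    (hnc : p.Nonconstant op) (hnd : ¬ p.Definite op) :
    ∃ bs : List A, ∀ x : A, p.eval op x = applyList op x bs := by
  induction p with
  | id => exact ⟨[], fun x => rfl⟩
  | const a =>
    obtain ⟨x, y, h⟩ := hnc
    exact absurd rfl h
  | app p q ihp ihq =>
    have hq : ¬ q.Nonconstant op := fun h => hnd (.right p q h)
    have hp : ¬ p.Definite op := fun h => hnd (.left p q h)
    have hqconst : ∀ x y, q.eval op x = q.eval op y := by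
      intro x y
      by_contra h
      exact hq ⟨x, y, h⟩
    obtain ⟨x₀, y₀, hxy⟩ := hnc
    cases hqx : q.eval op x₀ with
    | none =>
      exfalso
      apply hxy
      have h1 : ∀ x, (PGPoly.app p q).eval op x = none := by
        intro x
        have : q.eval op x = none := (hqconst x x₀).trans hqx
        simp [PGPoly.eval, this]
      rw [h1, h1]
    | some b =>
      have heval : ∀ x, (PGPoly.app p q).eval op x
          = (p.eval op x).bind fun u => op u b := by
        intro x
        have : q.eval op x = some b := (hqconst x x₀).trans hqx
        simp [PGPoly.eval, this]
      have hpnc : p.Nonconstant op := by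
        refine ⟨x₀, y₀, fun h => hxy ?_⟩
        rw [heval, heval, h]
      obtain ⟨bs, hbs⟩ := ihp hpnc hp
      refine ⟨bs ++ [b], fun x => ?_⟩
      rw [heval, hbs, applyList_append]
end

section
/- Let A be a pargoid. The relation ϖ_A = {⟨a,b⟩ : for all unary polynomial operations p of A, p(a)↓ ⟺ p(b)↓} is a congruence relation of A: it is an equivalence relation, and if a ≡ b, c ≡ d (ϖ_A), ac↓ and bd↓, then ac ≡ bd (ϖ_A). -/
/-- Substitution of q into the id leaves of p. -/
def PGPoly.comp {A : Type} : PGPoly A → PGPoly A → PGPoly A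
  | .id, q => q
  | .const a, _ => .const a
  | .app p₁ p₂, q => .app (p₁.comp q) (p₂.comp q)

/-- Whether p contains an id leaf. -/
def PGPoly.HasId {A : Type} : PGPoly A → Prop
  | .id => True
  | .const _ => False
  | .app p q => p.HasId ∨ q.HasId

lemma comp_eval_some {A : Type} (op : A → A → Option A) (p : PGPoly A) :
    ∀ (q : PGPoly A) (z v : A), q.eval op z = some v →
      (p.comp q).eval op z = p.eval op v := by
  induction p with
  | id => intro q z v h; simpa [PGPoly.comp, PGPoly.eval] using h
  | const a => intro q z v h; simp [PGPoly.comp, PGPoly.eval]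
  | app p₁ p₂ ih₁ ih₂ =>
      intro q z v h
      simp [PGPoly.comp, PGPoly.eval, ih₁ q z v h, ih₂ q z v h]

lemma noId_eval {A : Type} (op : A → A → Option A) (p : PGPoly A) (hp : ¬ p.HasId) :
    ∀ z w : A, p.eval op z = p.eval op w := by
  induction p with
  | id => exact absurd trivial hp
  | const a => intro z w; simp [PGPoly.eval]
  | app p₁ p₂ ih₁ ih₂ =>
      intro z w
      have h1 : ¬ p₁.HasId := fun h => hp (Or.inl h)
      have h2 : ¬ p₂.HasId := fun h => hp (Or.inr h)
      simp [PGPoly.eval, ih₁ h1 z w, ih₂ h2 z w]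

lemma hasId_comp_defined {A : Type} (op : A → A → Option A) (p : PGPoly A) :
    ∀ (q : PGPoly A) (z : A), p.HasId → ((p.comp q).eval op z).isSome →
      (q.eval op z).isSome := by
  induction p with
  | id => intro q z _ h; exact h
  | const a => intro q z h; exact absurd h (by simp [PGPoly.HasId])
  | app p₁ p₂ ih₁ ih₂ =>
      intro q z hid h
      simp only [PGPoly.comp, PGPoly.eval] at h
      rcases hu : (p₁.comp q).eval op z with _ | u
      · rw [hu] at h; simp at h
      rcases hv : (p₂.comp q).eval op z with _ | v
      · rw [hu, hv] at h; simp at h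
      rcases hid with hh | hh
      · exact ih₁ q z hh (by rw [hu]; rfl)
      · exact ih₂ q z hh (by rw [hv]; rfl)

lemma varpi_key {A : Type} (op : A → A → Option A) (a b c d x y : A)
    (hab : varpi op a b) (hcd : varpi op c d)
    (hx : op a c = some x) (hy : op b d = some y)
    (p : PGPoly A) (hp : (p.eval op x).isSome) : (p.eval op y).isSome := by
  by_cases hid : p.HasId
  · -- e₁ t = a·t
    set e₁ : PGPoly A := .app (.const a) .id with he₁
    have he₁c : e₁.eval op c = some x := by simpa [he₁, PGPoly.eval] using hx
    have h1 : ((p.comp e₁).eval op c).isSome := by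
      rw [comp_eval_some op p e₁ c x he₁c]; exact hp
    have h2 : ((p.comp e₁).eval op d).isSome := (hcd (p.comp e₁)).1 h1
    have h3 : (e₁.eval op d).isSome := hasId_comp_defined op p e₁ d hid h2
    have he₁d : e₁.eval op d = op a d := by simp [he₁, PGPoly.eval]
    rw [he₁d] at h3
    obtain ⟨w, hw⟩ := Option.isSome_iff_exists.1 h3
    have hpw : (p.eval op w).isSome := by
      rw [← comp_eval_some op p e₁ d w (by rw [he₁d]; exact hw)]; exact h2
    -- e₂ t = t·d
    set e₂ : PGPoly A := .app .id (.const d) with he₂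
    have he₂a : e₂.eval op a = some w := by simpa [he₂, PGPoly.eval] using hw
    have h4 : ((p.comp e₂).eval op a).isSome := by
      rw [comp_eval_some op p e₂ a w he₂a]; exact hpw
    have h5 : ((p.comp e₂).eval op b).isSome := (hab (p.comp e₂)).1 h4
    have he₂b : e₂.eval op b = some y := by simpa [he₂, PGPoly.eval] using hy
    rw [comp_eval_some op p e₂ b y he₂b] at h5
    exact h5
  · rw [noId_eval op p hid y x]; exact hp

theorem stmt11 {A : Type} (op : A → A → Option A) :
    Equivalence (varpi op) ∧
    ∀ a b c d : A, varpi op a b → varpi op c d →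
      ∀ x y : A, op a c = some x → op b d = some y → varpi op x y := by
  constructor
  · exact ⟨fun a p => Iff.rfl, fun h p => (h p).symm, fun h₁ h₂ p => (h₁ p).trans (h₂ p)⟩
  · intro a b c d hab hcd x y hx hy p
    constructor
    · exact varpi_key op a b c d x y hab hcd hx hy p
    · exact varpi_key op b a d c y x (fun q => (hab q).symm) (fun q => (hcd q).symm) hy hx p
end

section
/- Suppose the pargoid A satisfies: (i) whenever a definite unary polynomial converges on both a and c, then a ≡ c (ϖ_A), and (ii) <_A is well-founded (b <_A a iff ab↓ or b = ac for some c). Define S_0 = {α ∈ A/ϖ_A : ∃a ∈ α ∀b ∈ A, ab↑}, set A_α = α for α ∈ S_0, and recursively A_{α→β} = {a ∈ A : ∃b ∈ A_α, ab ∈ A_β}. Then every element of A belongs to some A_τ. -/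
/-- Ground types: ϖ-classes containing an element on which nothing converges. -/
def groundSet {A : Type} (op : A → A → Option A) : Set (Set A) :=
  {α | (∃ a, α = {b | varpi op a b}) ∧ ∃ a ∈ α, ∀ b, op a b = none}

/-- The recursively defined type assignment: A_α = α for ground classes,
A_{α→β} = {a | ∃ b ∈ A_α, ab ∈ A_β}. -/
def typeSet {A : Type} (op : A → A → Option A) : FreeMagma (Set A) → Set A
  | .of α => α
  | .mul s t => {a | ∃ b ∈ typeSet op s, ∃ c ∈ typeSet op t, op a b = some c}

/-- A type term is grounded if all its generators are ground classes. -/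
def Grounded {A : Type} (op : A → A → Option A) : FreeMagma (Set A) → Prop
  | .of α => α ∈ groundSet op
  | .mul s t => Grounded op s ∧ Grounded op t

theorem stmt13 {A : Type} (op : A → A → Option A)
    (hi : ∀ a c : A,
      (∃ p : PGPoly A, p.Definite op ∧ (p.eval op a).isSome ∧ (p.eval op c).isSome) →
      varpi op a c)
    (hii : WellFounded (ltA op)) :
    ∀ a : A, ∃ τ : FreeMagma (Set A), Grounded op τ ∧ a ∈ typeSet op τ := by
  intro a
  induction a using hii.induction with
  | _ a ih =>
    by_cases h : ∀ b, op a b = none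
    · exact ⟨.of {b | varpi op a b}, ⟨⟨a, rfl⟩, a, fun p => Iff.rfl, h⟩, fun p => Iff.rfl⟩
    · push_neg at h
      obtain ⟨b, hb⟩ := h
      obtain ⟨c, hc⟩ := Option.ne_none_iff_exists'.mp hb
      obtain ⟨σ, hσg, hbσ⟩ := ih b (Or.inl (by simp [hc]))
      obtain ⟨τ, hτg, hcτ⟩ := ih c (Or.inr ⟨b, hc⟩)
      exact ⟨.mul σ τ, ⟨hσg, hτg⟩, b, hbσ, c, hcτ, hc⟩
end

section
/- Under the hypotheses (i) and (ii) of the typability characterization, the type assignment defined by A_α = α for ground types α ∈ S_0 = {α ∈ A/ϖ_A : ∃a ∈ α ∀b, ab↑} and A_{α→β} = {a : ∃b ∈ A_α, ab ∈ A_β} satisfies: each a ∈ A belongs to at most one A_τ, and if a ∈ A_τ and b ≡ a (ϖ_A) then b ∈ A_τ. -/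
section Helpers

variable {A : Type}

lemma varpi_refl (op : A → A → Option A) (a : A) : varpi op a a := fun _ => Iff.rfl

lemma varpi_symm {op : A → A → Option A} {a b : A} (h : varpi op a b) : varpi op b a :=
  fun p => (h p).symm

lemma varpi_trans {op : A → A → Option A} {a b c : A} (h1 : varpi op a b)
    (h2 : varpi op b c) : varpi op a c := fun p => (h1 p).trans (h2 p)

/-- Substitute `p` for the identity in a polynomial. -/
def substP (p : PGPoly A) : PGPoly A → PGPoly A
  | .id => p
  | .const a => .const a
  | .app q r => .app (substP p q) (substP p r)

lemma substP_eval (op : A → A → Option A) (p : PGPoly A) {x y : A}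
    (hx : p.eval op x = some y) :
    ∀ q : PGPoly A, (substP p q).eval op x = q.eval op y
  | .id => hx
  | .const a => rfl
  | .app q r => by
      simp only [substP, PGPoly.eval, substP_eval op p hx q, substP_eval op p hx r]

/-- ϖ is a right congruence for application. -/
lemma varpi_app_right {op : A → A → Option A} {a a' b c c' : A}
    (hc : op a b = some c) (hc' : op a' b = some c') (h : varpi op a a') :
    varpi op c c' := by
  intro q
  have he : (PGPoly.app .id (.const b)).eval op a = some c := by
    simpa [PGPoly.eval] using hc
  have he' : (PGPoly.app .id (.const b)).eval op a' = some c' := by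
    simpa [PGPoly.eval] using hc'
  have := h (substP (.app .id (.const b)) q)
  rwa [substP_eval op _ he q, substP_eval op _ he' q] at this

/-- ϖ is a left congruence for application. -/
lemma varpi_app_left {op : A → A → Option A} {a b b' c c' : A}
    (hc : op a b = some c) (hc' : op a b' = some c') (h : varpi op b b') :
    varpi op c c' := by
  intro q
  have he : (PGPoly.app (.const a) .id).eval op b = some c := by
    simpa [PGPoly.eval] using hc
  have he' : (PGPoly.app (.const a) .id).eval op b' = some c' := by
    simpa [PGPoly.eval] using hc'
  have := h (substP (.app (.const a) .id) q)
  rwa [substP_eval op _ he q, substP_eval op _ he' q] at this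

/-- If ϖ relates a and a' and ab converges, then a'b converges. -/
lemma varpi_conv {op : A → A → Option A} {a a' b : A} (h : varpi op a a')
    (hb : (op a b).isSome) : (op a' b).isSome := by
  have := h (PGPoly.app .id (.const b))
  simpa [PGPoly.eval] using this.mp (by simpa [PGPoly.eval] using hb)

/-- Every element of a ground class is dead: nothing converges on it. -/
lemma ground_apply_none {op : A → A → Option A} {α : Set A} (hα : α ∈ groundSet op)
    {a : A} (ha : a ∈ α) : ∀ b, op a b = none := by
  obtain ⟨⟨x, rfl⟩, a₀, ha₀, hnone⟩ := hα
  intro b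
  have hv : varpi op a₀ a := varpi_trans (varpi_symm ha₀) ha
  by_contra hne
  have : (op a₀ b).isSome :=
    varpi_conv (varpi_symm hv) (Option.isSome_iff_ne_none.mpr hne)
  simp [hnone b] at this

/-- ϖ-invariance of the type sets. -/
lemma typeSet_invariant (op : A → A → Option A) :
    ∀ (τ : FreeMagma (Set A)), Grounded op τ →
      ∀ a b : A, a ∈ typeSet op τ → varpi op a b → b ∈ typeSet op τ := by
  intro τ
  induction τ using FreeMagma.rec with
  | of α =>
      intro hτ a b ha hab
      obtain ⟨⟨x, rfl⟩, _⟩ := hτ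
      exact varpi_trans ha hab
  | mul s t ihs iht =>
      intro hτ a b ha hab
      obtain ⟨d, hd, c, hc, hadc⟩ := ha
      have hbd : (op b d).isSome := varpi_conv hab (by simp [hadc])
      obtain ⟨c', hc'⟩ := Option.isSome_iff_exists.mp hbd
      have hcc' : varpi op c c' := varpi_app_right hadc hc' hab
      exact ⟨d, hd, c', iht hτ.2 c c' hc hcc', hc'⟩

/-- A nonempty grounded type set yields a dead element. -/
lemma exists_dead {op : A → A → Option A} :
    ∀ {τ : FreeMagma (Set A)}, Grounded op τ → (typeSet op τ).Nonempty →
      ∃ a₀ : A, ∀ b, op a₀ b = none := by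
  intro τ
  induction τ using FreeMagma.rec with
  | of α =>
      intro hτ _
      obtain ⟨_, a₀, _, h⟩ := hτ
      exact ⟨a₀, h⟩
  | mul s t ihs iht =>
      intro hτ hne
      obtain ⟨a, d, hd, c, hc, h⟩ := hne
      exact ihs hτ.1 ⟨d, hd⟩

end Helpers

theorem stmt14 {A : Type} (op : A → A → Option A)
    (hi : ∀ a c : A,
      (∃ p : PGPoly A, p.Definite op ∧ (p.eval op a).isSome ∧ (p.eval op c).isSome) →
      varpi op a c)
    (hii : WellFounded (ltA op)) :
    (∀ (a : A) (τ σ : FreeMagma (Set A)), Grounded op τ → Grounded op σ →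
      a ∈ typeSet op τ → a ∈ typeSet op σ → τ = σ) ∧
    (∀ (a b : A) (τ : FreeMagma (Set A)), Grounded op τ →
      a ∈ typeSet op τ → varpi op a b → b ∈ typeSet op τ) := by
  refine ⟨?_, fun a b τ hτ ha hab => typeSet_invariant op τ hτ a b ha hab⟩
  intro a
  induction a using WellFounded.induction hii with
  | _ a IH =>
    intro τ σ hτ hσ haτ haσ
    cases τ with
    | of α =>
      cases σ with
      | of β =>
        obtain ⟨⟨x, hx⟩, _⟩ := hτ
        obtain ⟨⟨y, hy⟩, _⟩ := hσ
        have hxa : varpi op x a := by rw [hx] at haτ; exact haτ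
        have hya : varpi op y a := by rw [hy] at haσ; exact haσ
        have : α = β := by
          rw [hx, hy]
          ext b
          constructor
          · intro hb
            exact varpi_trans hya (varpi_trans (varpi_symm hxa) hb)
          · intro hb
            exact varpi_trans hxa (varpi_trans (varpi_symm hya) hb)
        rw [this]
      | mul u v =>
        obtain ⟨d, hd, c, hc, hadc⟩ := haσ
        have := ground_apply_none hτ haτ d
        simp [this] at hadc
    | mul s t =>
      cases σ with
      | of β =>
        obtain ⟨d, hd, c, hc, hadc⟩ := haτ
        have := ground_apply_none hσ haσ d
        simp [this] at hadc
      | mul u v =>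
        obtain ⟨d, hd, c, hc, hadc⟩ := haτ
        obtain ⟨d', hd', c', hc', hadc'⟩ := haσ
        -- two distinct elements: a dead element and a itself
        obtain ⟨a₀, ha₀⟩ := exists_dead hτ.1 ⟨d, hd⟩
        have hid : (PGPoly.id : PGPoly A).Nonconstant op := by
          refine ⟨a₀, a, ?_⟩
          simp only [PGPoly.eval]
          intro h
          have : a₀ = a := Option.some_injective A h
          subst this
          simp [ha₀ d] at hadc
        -- d and d' are ϖ-equivalent via the definite polynomial x ↦ a·x
        have hdd' : varpi op d d' := by
          refine hi d d' ⟨.app (.const a) .id, .right _ _ hid, ?_, ?_⟩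
          · simpa [PGPoly.eval] using (by simp [hadc] : (op a d).isSome)
          · simpa [PGPoly.eval] using (by simp [hadc'] : (op a d').isSome)
        -- hence s = u by induction on d (d <_A a)
        have hd'u : d ∈ typeSet op u :=
          typeSet_invariant op u hσ.1 d' d hd' (varpi_symm hdd')
        have hsu : s = u :=
          IH d (Or.inl (by simp [hadc])) s u hτ.1 hσ.1 hd hd'u
        -- and c, c' are ϖ-equivalent, so t = v by induction on c
        have hcc' : varpi op c c' := varpi_app_left hadc hadc' hdd'
        have hc't : c' ∈ typeSet op t :=
          typeSet_invariant op t hτ.2 c c' hc hcc'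
        have htv : t = v :=
          IH c' (Or.inr ⟨d', hadc'⟩) t v hτ.2 hσ.2 hc't hc'
        rw [hsu, htv]
end
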